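/- In a tree T, let P be a finite set of edges and suppose every vertex v of T has the 'escape' property: some ray from v is disjoint from P. If an oriented edge ē lies in the interior of the convex hull of P but cannot escape (every ray of the form ē · r meets P̂ = P minus the interior of the hull), then every ray of the form ē · r contains exactly one edge of P. -/

import Mathlib

/-!
In a forest a walk is a path as soon as it never immediately reverses an edge
(`SimpleGraph.IsAcyclic.isPath_iff_isChain`). Suppose a ray `r` starting `u, v` met `P` at
times `m < n`. Leaving `r` at `r (m + 1)` along a ray that avoids `P` never reverses an edge,
since the edge of `r` just traversed is in `P`; so this is again a ray starting `u, v`, and it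
meets `P̂` at some time `k ≥ 1`. This cannot happen after the turn, where the ray avoids `P`,
nor before it: there the edges of `r` lie between the edge of `P` from which the hull reaches
`(u, v)` and the edge `s(r n, r (n + 1)) ∈ P`, hence in the interior of the hull.
-/

open SimpleGraph

/-- The interior of the convex hull of a set `P` of edges of a graph `G`:
the edges lying strictly between two edges of `P` on a geodesic path whose
first and last edges belong to `P` (the extremal edges are excluded). -/
def interiorEdgeHull {V : Type*} (G : SimpleGraph V) (P : Set (Sym2 V)) :
    Set (Sym2 V) :=
  {e | ∃ (a b : V) (p : G.Walk a b), p.IsPath ∧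
      ∃ e₁ ∈ P, ∃ e₂ ∈ P, ∃ l₁ l₂ : List (Sym2 V),
        p.edges = e₁ :: (l₁ ++ e :: l₂) ++ [e₂]}

namespace SimpleGraph

variable {V : Type*} {G : SimpleGraph V}

def rayWalk (r : ℕ → V) (hr : ∀ n, G.Adj (r n) (r (n + 1))) : (n : ℕ) → G.Walk (r 0) (r n)
  | 0 => Walk.nil
  | n + 1 => (rayWalk r hr n).concat (hr n)

variable {r r' : ℕ → V}

lemma edges_rayWalk (hr : ∀ n, G.Adj (r n) (r (n + 1))) (n : ℕ) :
    (rayWalk r hr n).edges = (List.range n).map fun i => s(r i, r (i + 1)) := by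
  induction n with
  | zero => rfl
  | succ n ih => simp [rayWalk, Walk.edges_concat, ih, List.range_succ]

lemma support_rayWalk (hr : ∀ n, G.Adj (r n) (r (n + 1))) (n : ℕ) :
    (rayWalk r hr n).support = (List.range (n + 1)).map r := by
  induction n with
  | zero => rfl
  | succ n ih => simp [rayWalk, Walk.support_concat, ih, List.range_succ]

lemma isPath_rayWalk (hr : ∀ n, G.Adj (r n) (r (n + 1))) (hinj : Function.Injective r)
    (n : ℕ) : (rayWalk r hr n).IsPath := by
  rw [Walk.isPath_def, support_rayWalk]
  exact List.nodup_range.map hinj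

lemma IsAcyclic.isPath_append (hG : G.IsAcyclic) {a b c : V} {p : G.Walk a b}
    {q : G.Walk b c} (hp : p.IsPath) (hq : q.IsPath)
    (hpq : ∀ x ∈ p.edges.getLast?, ∀ y ∈ q.edges.head?, x ≠ y) : (p.append q).IsPath := by
  rw [hG.isPath_iff_isChain, Walk.edges_append]
  exact ((hG.isPath_iff_isChain p).mp hp).append ((hG.isPath_iff_isChain q).mp hq) hpq

lemma IsAcyclic.injective_of_forall_ne_add_two (hG : G.IsAcyclic)
    (hr : ∀ n, G.Adj (r n) (r (n + 1))) (hne : ∀ n, r n ≠ r (n + 2)) :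
    Function.Injective r := by
  have hpath (n : ℕ) : (rayWalk r hr n).IsPath := by
    rw [hG.isPath_iff_isChain, edges_rayWalk, List.isChain_map, List.isChain_range]
    intro i _ h
    rcases Sym2.eq_iff.mp h with ⟨-, h⟩ | ⟨h, -⟩
    · exact (hr (i + 1)).ne h
    · exact hne i h
  intro i j hij
  have hnd := (hpath (max i j)).support_nodup
  rw [support_rayWalk] at hnd
  exact List.inj_on_of_nodup_map hnd (by simp) (by simp) hij

def splice (r r' : ℕ → V) (k n : ℕ) : V := if n ≤ k then r n else r' (n - k)

lemma splice_of_le {k n : ℕ} (h : n ≤ k) : splice r r' k n = r n := if_pos h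

lemma splice_add {k : ℕ} (h : r' 0 = r k) (n : ℕ) : splice r r' k (k + n) = r' n := by
  unfold splice
  split_ifs with hle
  · obtain rfl : n = 0 := by omega
    simp [h]
  · simp

lemma adj_splice {k : ℕ} (hr : ∀ n, G.Adj (r n) (r (n + 1)))
    (hr' : ∀ n, G.Adj (r' n) (r' (n + 1))) (h : r' 0 = r k) (n : ℕ) : G.Adj (splice r r' k n) (splice r r' k (n + 1)) := by
  rcases lt_or_ge n k with hn | hn
  · rw [splice_of_le hn.le, splice_of_le hn]
    exact hr n
  · obtain ⟨j, rfl⟩ := Nat.exists_eq_add_of_le hn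
    rw [splice_add h, add_assoc, splice_add h]
    exact hr' j

lemma splice_ne_add_two {m : ℕ} (hinj : Function.Injective r)
    (hinj' : Function.Injective r') (h : r' 0 = r (m + 1)) (hm : r m ≠ r' 1) (n : ℕ) :
    splice r r' (m + 1) n ≠ splice r r' (m + 1) (n + 2) := by
  rcases lt_trichotomy n m with hn | rfl | hn
  · rw [splice_of_le (by omega), splice_of_le (by omega)]
    exact hinj.ne (by omega)
  · rw [splice_of_le (by omega), show n + 2 = n + 1 + 1 by omega, splice_add h]
    exact hm
  · obtain ⟨j, rfl⟩ := Nat.exists_eq_add_of_le (Nat.succ_le_of_lt hn)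
    rw [splice_add h, show m + 1 + j + 2 = m + 1 + (j + 2) by omega, splice_add h]
    exact hinj'.ne (by omega)

lemma IsAcyclic.injective_splice (hG : G.IsAcyclic) {m : ℕ}
    (hr : ∀ n, G.Adj (r n) (r (n + 1))) (hr' : ∀ n, G.Adj (r' n) (r' (n + 1)))
    (hinj : Function.Injective r) (hinj' : Function.Injective r') (h : r' 0 = r (m + 1))
    (hm : r m ≠ r' 1) : Function.Injective (splice r r' (m + 1)) :=
  hG.injective_of_forall_ne_add_two (adj_splice hr hr' h) (splice_ne_add_two hinj hinj' h hm)

lemma Walk.IsPath.edges_eq_cons_of_append_cons {a b u v : V} {h : G.Adj u v}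
    {p : G.Walk a u} {q : G.Walk v b} (hpq : (p.append (cons h q)).IsPath) {e : Sym2 V}
    (hhead : (p.append (cons h q)).edges.head? = some e) (hne : e ≠ s(u, v)) :
    p.IsPath ∧ s(u, v) ∉ p.edges ∧ ∃ l, p.edges = e :: l := by
  have hnd := hpq.edges_nodup
  simp only [Walk.edges_append, Walk.edges_cons] at hnd hhead
  refine ⟨hpq.of_append_left,
    fun hm => (List.nodup_append.mp hnd).2.2 _ hm _ List.mem_cons_self rfl, ?_⟩
  cases hp : p.edges with
  | nil => simp_all
  | cons x l => simp_all

lemma exists_isPath_of_mem_interiorEdgeHull {P : Set (Sym2 V)} {u v : V}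
    (hint : s(u, v) ∈ interiorEdgeHull G P) :
    ∃ (c : V) (p : G.Walk c u), p.IsPath ∧ s(u, v) ∉ p.edges ∧
      ∃ e ∈ P, ∃ l, p.edges = e :: l := by
  obtain ⟨a, b, p, hp, e₁, he₁, e₂, he₂, l₁, l₂, hed⟩ := hint
  have hmem : s(u, v) ∈ p.edges := by simp [hed]
  have hnd := hp.edges_nodup
  rw [hed] at hnd
  have hne₁ : e₁ ≠ s(u, v) := by grind
  have hne₂ : e₂ ≠ s(u, v) := by grind
  have hadj : G.Adj u v := p.adj_of_mem_edges hmem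
  rcases (Walk.isSubwalk_toWalk_iff_mem_edges hadj).mpr hmem with
    ⟨p₁, p₂, rfl⟩ | ⟨p₁, p₂, rfl⟩
  · have hsplit : (p₁.append hadj.toWalk).append p₂ = p₁.append (.cons hadj p₂) := by
      rw [← Walk.append_assoc]
      rfl
    rw [hsplit] at hp hed
    obtain ⟨hp₁, hnot, l, hl⟩ :=
      hp.edges_eq_cons_of_append_cons (by rw [hed]; rfl) hne₁
    exact ⟨a, p₁, hp₁, hnot, e₁, he₁, l, hl⟩
  · have hsplit : ((p₁.append hadj.symm.toWalk).append p₂).reverse =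
        p₂.reverse.append (.cons hadj p₁.reverse) := by
      simp
    have hrev := hp.reverse
    rw [hsplit] at hrev
    obtain ⟨hp₂, hnot, l, hl⟩ :=
      hrev.edges_eq_cons_of_append_cons (by rw [← hsplit, Walk.edges_reverse, hed]; simp) hne₂
    exact ⟨b, p₂.reverse, hp₂, hnot, e₂, he₂, l, hl⟩

lemma IsAcyclic.mem_interiorEdgeHull_of_lt (hG : G.IsAcyclic) {P : Set (Sym2 V)}
    (hr : ∀ n, G.Adj (r n) (r (n + 1))) (hinj : Function.Injective r)
    (hint : s(r 0, r 1) ∈ interiorEdgeHull G P) {k N : ℕ} (hkN : k < N)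
    (hN : s(r N, r (N + 1)) ∈ P) : s(r k, r (k + 1)) ∈ interiorEdgeHull G P := by
  obtain ⟨c, p, hp, hnot, e, he, l, hl⟩ := exists_isPath_of_mem_interiorEdgeHull hint
  have hq : (p.append (rayWalk r hr (N + 1))).IsPath := by
    refine hG.isPath_append hp (isPath_rayWalk hr hinj _) fun x hx y hy hxy => hnot ?_
    simp only [edges_rayWalk, List.range_succ_eq_map, List.map_cons, List.head?_cons,
      Option.mem_def, Option.some.injEq] at hy
    rw [hy, ← hxy]
    exact List.mem_of_getLast? hx
  obtain ⟨A, B, hAB⟩ := List.append_of_mem (List.mem_range.mpr hkN)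
  refine ⟨c, r (N + 1), _, hq, e, he, _, hN, l ++ A.map fun i => s(r i, r (i + 1)),
    B.map fun i => s(r i, r (i + 1)), ?_⟩
  rw [Walk.edges_append, hl, edges_rayWalk, List.range_succ, hAB]
  simp

end SimpleGraph

theorem no_escape_exactly_one_general {V : Type*} (G : SimpleGraph V) (hacyc : G.IsAcyclic)
    (P : Set (Sym2 V))
    (hescape : ∀ v : V, ∃ r : ℕ → V, r 0 = v ∧ Function.Injective r ∧
      (∀ n, G.Adj (r n) (r (n + 1))) ∧ ∀ n, s(r n, r (n + 1)) ∉ P)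
    (u v : V) (hint : s(u, v) ∈ interiorEdgeHull G P)
    (hnoescape : ∀ r : ℕ → V, r 0 = u → r 1 = v → Function.Injective r →
      (∀ n, G.Adj (r n) (r (n + 1))) →
      ∃ n ≥ 1, s(r n, r (n + 1)) ∈ P \ interiorEdgeHull G P) :
    ∀ r : ℕ → V, r 0 = u → r 1 = v → Function.Injective r →
      (∀ n, G.Adj (r n) (r (n + 1))) →
      ∃! n : ℕ, s(r n, r (n + 1)) ∈ P := by
  rintro r rfl rfl hinj hr
  have hlater_notMem {m n : ℕ} (hmn : m < n) (hm : s(r m, r (m + 1)) ∈ P) :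
      s(r n, r (n + 1)) ∉ P := by
    intro hn
    obtain ⟨r', hr'0, hinj', hr', hr'P⟩ := hescape (r (m + 1))
    have hturn : r m ≠ r' 1 := fun h => hr'P 0 (by rwa [hr'0, ← h, Sym2.eq_swap])
    obtain ⟨k, -, hkP, hkI⟩ := hnoescape (splice r r' (m + 1)) (splice_of_le (by omega))
      (splice_of_le (by omega)) (hacyc.injective_splice hr hr' hinj hinj' hr'0 hturn)
      (adj_splice hr hr' hr'0)
    rcases le_or_gt k m with hkm | hkm
    · rw [splice_of_le (by omega), splice_of_le (by omega)] at hkI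
      exact hkI (hacyc.mem_interiorEdgeHull_of_lt hr hinj hint (hkm.trans_lt hmn) hn)
    · obtain ⟨j, rfl⟩ := Nat.exists_eq_add_of_le hkm
      rw [splice_add hr'0, add_assoc, splice_add hr'0] at hkP
      exact hr'P j hkP
  obtain ⟨n₀, -, hn₀, -⟩ := hnoescape r rfl rfl hinj hr
  refine ⟨n₀, hn₀, fun n hn => ?_⟩
  rcases lt_trichotomy n n₀ with h | h | h
  · exact absurd hn₀ (hlater_notMem h hn)
  · exact h
  · exact absurd hn (hlater_notMem h hn₀)

/-- In a locally finite tree with all vertices of degree at least 2, let `P`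
be a finite set of edges such that from every vertex there is a ray disjoint
from `P`.  If the oriented edge `(u, v)` lies in the interior of the convex
hull of `P` but cannot escape (every ray starting `u, v, …` meets
`P̂ = P − interior hull`), then every ray starting `u, v, …` contains exactly
one edge of `P`. -/
theorem no_escape_exactly_one {V : Type*} (G : SimpleGraph V)
    (hconn : G.Connected) (hacyc : G.IsAcyclic) (hlf : G.LocallyFinite)
    (hdeg : ∀ v : V, ∃ a b : V, a ≠ b ∧ G.Adj v a ∧ G.Adj v b)
    (P : Set (Sym2 V)) (hPfin : P.Finite) (hPsub : P ⊆ G.edgeSet)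
    (hescape : ∀ v : V, ∃ r : ℕ → V, r 0 = v ∧ Function.Injective r ∧
      (∀ n, G.Adj (r n) (r (n + 1))) ∧ ∀ n, s(r n, r (n + 1)) ∉ P)
    (u v : V) (huv : G.Adj u v) (hint : s(u, v) ∈ interiorEdgeHull G P)
    (hnoescape : ∀ r : ℕ → V, r 0 = u → r 1 = v → Function.Injective r →
      (∀ n, G.Adj (r n) (r (n + 1))) →
      ∃ n ≥ 1, s(r n, r (n + 1)) ∈ P \ interiorEdgeHull G P) :
    ∀ r : ℕ → V, r 0 = u → r 1 = v → Function.Injective r →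
      (∀ n, G.Adj (r n) (r (n + 1))) →
      ∃! n : ℕ, s(r n, r (n + 1)) ∈ P :=
  no_escape_exactly_one_general G hacyc P hescape u v hint hnoescape
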